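/- arXiv:1908.02306 — 3 statements merged into one kernel-verified Lean document; each statement's English description precedes it below -/
import Mathlib

section
/- Let b > 0, σ > 0, α, β > −1, and n ∈ ℕ. Assume the Gauss–Jacobi hypothesis holds for ξ_0,…,ξ_n and ω_0,…,ω_n, and set x_j = b((1+ξ_j)/2)^{1/σ}, w_j = (1/σ)(b^σ/2)^{α+β+1} ω_j. Then for every function f in the linear span of {x^{kσ} : k = 0, 1, …, 2n+1}, one has ∫_0^b f(x) x^{σ(β+1)−1} (b^σ − x^σ)^α dx = Σ_{j=0}^{n} w_j f(x_j). -/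
open Real MeasureTheory Finset

theorem muntz_quadrature
    (b σ α β : ℝ) (hb : 0 < b) (hσ : 0 < σ) (hα : α > -1) (hβ : β > -1) (n : ℕ)
    (ξ ω : Fin (n + 1) → ℝ) (hξ : ∀ j, ξ j ∈ Set.Ioo (-1 : ℝ) 1)
    (hinj : Function.Injective ξ)
    (hquad : ∀ p : Polynomial ℝ, p.natDegree ≤ 2 * n + 1 →
      ∫ x in (-1 : ℝ)..1, p.eval x * ((1 - x) ^ α * (1 + x) ^ β) =
        ∑ j, ω j * p.eval (ξ j))
    (f : ℝ → ℝ)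
    (hf : f ∈ Submodule.span ℝ
      (Set.range fun k : Fin (2 * n + 2) => fun x : ℝ => x ^ ((k : ℕ) * σ))) :
    ∫ x in (0:ℝ)..b, f x * (x ^ (σ * (β + 1) - 1) * (b ^ σ - x ^ σ) ^ α) =
      ∑ j, (1 / σ) * (b ^ σ / 2) ^ (α + β + 1) * ω j *
        f (b * ((1 + ξ j) / 2) ^ (1 / σ)) := by
  rw [Submodule.mem_span_range_iff_exists_fun] at hf
  obtain ⟨c, hc⟩ := hf
  have hσ' : σ ≠ 0 := hσ.ne'
  set φ : ℝ → ℝ := fun t => b * ((1 + t) / 2) ^ (1 / σ) with hφdef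
  set φ' : ℝ → ℝ := fun t => b * (1 / 2 * (1 / σ) * ((1 + t) / 2) ^ (1 / σ - 1)) with hφ'def
  set p : Polynomial ℝ := ∑ k : Fin (2 * n + 2),
      Polynomial.C (c k * b ^ ((k : ℕ) * σ)) *
        (Polynomial.C (2 : ℝ)⁻¹ * (1 + Polynomial.X)) ^ (k : ℕ) with hpdef
  -- f ∘ φ = p.eval on (-1, ∞)
  have hfp : ∀ t : ℝ, -1 < t → f (φ t) = p.eval t := by
    intro t ht
    have hy : (0 : ℝ) < (1 + t) / 2 := by linarith
    rw [← hc]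
    simp only [hpdef, Polynomial.eval_finset_sum, Polynomial.eval_mul, Polynomial.eval_pow,
      Polynomial.eval_C, Polynomial.eval_add, Polynomial.eval_one, Polynomial.eval_X,
      Finset.sum_apply, Pi.smul_apply, smul_eq_mul]
    refine Finset.sum_congr rfl fun k _ => ?_
    have h1 : φ t ^ ((k : ℕ) * σ) = b ^ ((k : ℕ) * σ) * ((1 + t) / 2) ^ (k : ℕ) := by
      rw [hφdef]
      rw [Real.mul_rpow hb.le (Real.rpow_nonneg hy.le _)]
      congr 1
      rw [← Real.rpow_natCast ((1 + t) / 2) k, ← Real.rpow_mul hy.le]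
      congr 1
      field_simp
    rw [h1]
    have : ((1 + t) / 2) = 2⁻¹ * (1 + t) := by ring
    rw [this]; ring
  -- degree bound
  have hq1 : (Polynomial.C (2 : ℝ)⁻¹ * (1 + Polynomial.X)).natDegree ≤ 1 := by
    refine le_trans Polynomial.natDegree_mul_le ?_
    rw [Polynomial.natDegree_C, zero_add]
    refine le_trans (Polynomial.natDegree_add_le _ _) ?_
    simp [Polynomial.natDegree_X_le]
  have hdeg : p.natDegree ≤ 2 * n + 1 := by
    refine Polynomial.natDegree_sum_le_of_forall_le _ _ fun k _ => ?_
    calc (Polynomial.C (c k * b ^ ((k : ℕ) * σ)) *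
          (Polynomial.C (2 : ℝ)⁻¹ * (1 + Polynomial.X)) ^ (k : ℕ)).natDegree
        ≤ (Polynomial.C (c k * b ^ ((k : ℕ) * σ))).natDegree +
            ((Polynomial.C (2 : ℝ)⁻¹ * (1 + Polynomial.X)) ^ (k : ℕ)).natDegree :=
          Polynomial.natDegree_mul_le
      _ = ((Polynomial.C (2 : ℝ)⁻¹ * (1 + Polynomial.X)) ^ (k : ℕ)).natDegree := by
          rw [Polynomial.natDegree_C, zero_add]
      _ ≤ (k : ℕ) * (Polynomial.C (2 : ℝ)⁻¹ * (1 + Polynomial.X)).natDegree :=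
          Polynomial.natDegree_pow_le
      _ ≤ (k : ℕ) * 1 := Nat.mul_le_mul_left _ hq1
      _ ≤ 2 * n + 1 := by omega
  -- derivative of φ
  have hderiv : ∀ t ∈ Set.Ioo (-1 : ℝ) 1, HasDerivWithinAt φ (φ' t) (Set.Ioo (-1 : ℝ) 1) t := by
    intro t ht
    have hy : (0 : ℝ) < (1 + t) / 2 := by have := ht.1; linarith
    have h0 : HasDerivAt (fun t : ℝ => (1 + t) / 2) (1 / 2) t := by
      simpa using ((hasDerivAt_id t).const_add 1).div_const 2
    have h1 := h0.rpow_const (p := 1 / σ) (Or.inl hy.ne')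
    have h2 := h1.const_mul b
    exact h2.hasDerivWithinAt
  -- injectivity of φ on the interval
  have hinjφ : Set.InjOn φ (Set.Ioo (-1 : ℝ) 1) := by
    intro s hs t ht h
    have hys : (0 : ℝ) < (1 + s) / 2 := by have := hs.1; linarith
    have hyt : (0 : ℝ) < (1 + t) / 2 := by have := ht.1; linarith
    have h' : ((1 + s) / 2) ^ (1 / σ) = ((1 + t) / 2) ^ (1 / σ) := by
      have := mul_left_cancel₀ hb.ne' h
      exact this
    have := congrArg (fun x : ℝ => x ^ σ) h'
    simp only [← Real.rpow_mul hys.le, ← Real.rpow_mul hyt.le] at this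
    rw [one_div, inv_mul_cancel₀ hσ', Real.rpow_one, Real.rpow_one] at this
    linarith
  -- image of φ
  have himg : φ '' Set.Ioo (-1 : ℝ) 1 = Set.Ioo 0 b := by
    ext x
    constructor
    · rintro ⟨t, ht, rfl⟩
      have hy : (0 : ℝ) < (1 + t) / 2 := by have := ht.1; linarith
      have hy1 : (1 + t) / 2 < 1 := by have := ht.2; linarith
      constructor
      · exact mul_pos hb (Real.rpow_pos_of_pos hy _)
      · have : ((1 + t) / 2) ^ (1 / σ) < 1 :=
          Real.rpow_lt_one hy.le hy1 (by positivity)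
        calc b * ((1 + t) / 2) ^ (1 / σ) < b * 1 := by
              exact mul_lt_mul_of_pos_left this hb
          _ = b := mul_one b
    · rintro ⟨hx0, hxb⟩
      refine ⟨2 * (x / b) ^ σ - 1, ⟨?_, ?_⟩, ?_⟩
      · have : (0 : ℝ) < (x / b) ^ σ := Real.rpow_pos_of_pos (div_pos hx0 hb) _
        linarith
      · have : (x / b) ^ σ < 1 :=
          Real.rpow_lt_one (div_nonneg hx0.le hb.le) ((div_lt_one hb).mpr hxb) hσ
        linarith
      · have h1 : (1 + (2 * (x / b) ^ σ - 1)) / 2 = (x / b) ^ σ := by ring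
        rw [hφdef]
        simp only [h1]
        rw [← Real.rpow_mul (by positivity), mul_one_div, div_self hσ', Real.rpow_one]
        field_simp
  -- pointwise identity on (-1,1)
  have hC : (0 : ℝ) < b ^ σ / 2 := by positivity
  have key : ∀ t ∈ Set.Ioo (-1 : ℝ) 1,
      |φ' t| * (f (φ t) * (φ t ^ (σ * (β + 1) - 1) * (b ^ σ - φ t ^ σ) ^ α)) =
      1 / σ * (b ^ σ / 2) ^ (α + β + 1) * (p.eval t * ((1 - t) ^ α * (1 + t) ^ β)) := by
    intro t ht
    have hy : (0 : ℝ) < (1 + t) / 2 := by have := ht.1; linarith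
    have hz : (0 : ℝ) < (1 - t) / 2 := by have := ht.2; linarith
    have habs : |φ' t| = φ' t := abs_of_pos (by
      rw [hφ'def]
      have := Real.rpow_pos_of_pos hy (1 / σ - 1)
      positivity)
    rw [habs, ← hfp t ht.1]
    have hφσ : φ t ^ σ = b ^ σ * ((1 + t) / 2) := by
      rw [hφdef, Real.mul_rpow hb.le (Real.rpow_nonneg hy.le _),
        ← Real.rpow_mul hy.le, one_div, inv_mul_cancel₀ hσ', Real.rpow_one]
    have hsub : b ^ σ - φ t ^ σ = b ^ σ * ((1 - t) / 2) := by rw [hφσ]; ring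
    have hφpow : φ t ^ (σ * (β + 1) - 1)
        = b ^ (σ * (β + 1) - 1) * ((1 + t) / 2) ^ (1 / σ * (σ * (β + 1) - 1)) := by
      rw [hφdef, Real.mul_rpow hb.le (Real.rpow_nonneg hy.le _), ← Real.rpow_mul hy.le]
    have hsubpow : (b ^ σ - φ t ^ σ) ^ α = (b ^ σ) ^ α * ((1 - t) / 2) ^ α := by
      rw [hsub, Real.mul_rpow (by positivity) hz.le]
    rw [hφpow, hsubpow]
    rw [hφ'def]
    -- collect powers of y = (1+t)/2
    have hc2 : (1 : ℝ) / σ - 1 + 1 / σ * (σ * (β + 1) - 1) = β := by field_simp; ring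
    have hyc : ((1 + t) / 2) ^ (1 / σ - 1) * ((1 + t) / 2) ^ (1 / σ * (σ * (β + 1) - 1))
        = ((1 + t) / 2) ^ β := by rw [← Real.rpow_add hy, hc2]
    have hyb : ((1 + t) / 2) ^ β = (1 + t) ^ β / 2 ^ β :=
      Real.div_rpow (by nlinarith [ht.1]) (by norm_num) β
    have hzb : ((1 - t) / 2) ^ α = (1 - t) ^ α / 2 ^ α :=
      Real.div_rpow (by nlinarith [ht.2]) (by norm_num) α
    have hbc : b * b ^ (σ * (β + 1) - 1) * (b ^ σ) ^ α = b ^ (σ * (α + β + 1)) := by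
      have e1 : (b ^ σ) ^ α = b ^ (σ * α) := (Real.rpow_mul hb.le σ α).symm
      have e2 : σ * (α + β + 1) = 1 + (σ * (β + 1) - 1) + σ * α := by ring
      rw [e1, e2, Real.rpow_add hb, Real.rpow_add hb, Real.rpow_one]
    have hBC : (b ^ σ / 2) ^ (α + β + 1)
        = b ^ (σ * (α + β + 1)) / 2 ^ (α + β + 1) := by
      rw [Real.div_rpow (by positivity) (by norm_num), ← Real.rpow_mul hb.le]
    have h2c : (2 : ℝ) ^ (α + β + 1) = 2 ^ α * 2 ^ β * 2 := by
      rw [Real.rpow_add (by norm_num), Real.rpow_add (by norm_num), Real.rpow_one]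
    have h2α : (0:ℝ) < 2 ^ α := Real.rpow_pos_of_pos (by norm_num) _
    have h2β : (0:ℝ) < 2 ^ β := Real.rpow_pos_of_pos (by norm_num) _
    rw [hBC, h2c, hzb]
    have step : b * (1 / 2 * (1 / σ) * ((1 + t) / 2) ^ (1 / σ - 1)) *
          (f (φ t) * (b ^ (σ * (β + 1) - 1) * ((1 + t) / 2) ^ (1 / σ * (σ * (β + 1) - 1)) *
            ((b ^ σ) ^ α * ((1 - t) ^ α / 2 ^ α)))) =
        1 / σ * (b * b ^ (σ * (β + 1) - 1) * (b ^ σ) ^ α *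
          ((((1 + t) / 2) ^ (1 / σ - 1) * ((1 + t) / 2) ^ (1 / σ * (σ * (β + 1) - 1))) *
            (f (φ t) * (1 - t) ^ α)) / (2 * 2 ^ α)) := by ring
    rw [step, hbc, hyc, hyb]
    field_simp
  -- main computation
  have h0b : (0:ℝ) ≤ b := hb.le
  rw [intervalIntegral.integral_of_le h0b, MeasureTheory.integral_Ioc_eq_integral_Ioo, ← himg,
    integral_image_eq_integral_abs_deriv_smul measurableSet_Ioo hderiv hinjφ]
  simp only [smul_eq_mul]
  rw [MeasureTheory.setIntegral_congr_fun measurableSet_Ioo key]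
  rw [MeasureTheory.integral_const_mul]
  rw [← MeasureTheory.integral_Ioc_eq_integral_Ioo,
    ← intervalIntegral.integral_of_le (by norm_num : (-1:ℝ) ≤ 1)]
  rw [hquad p hdeg, Finset.mul_sum]
  refine Finset.sum_congr rfl fun j _ => ?_
  rw [hfp (ξ j) (hξ j).1]
  ring
end

section
/- Let b > 0, σ > 0, α, β > −1, η, μ ∈ ℝ, and n ∈ ℕ. Assume the Gauss–Jacobi hypothesis holds for ξ_0,…,ξ_n and ω_0,…,ω_n, and set x_j = b((1+ξ_j)/2)^{1/σ}, w_j = (1/σ)(b^σ/2)^{α+β+1} ω_j, and w_j^{(1)} = w_j · x_j^{2σ(η+μ−β)}. Then for every function f in the linear span of {x^{2σ(β−μ−η)+kσ} : k = 0, 1, …, 2n+1}, one has ∫_0^b f(x) x^{σ(2(η+μ)−β+1)−1} (b^σ − x^σ)^α dx = Σ_{j=0}^{n} w_j^{(1)} f(x_j). -/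
/-!
Substituting `x = b ((1 + t) / 2) ^ (1 / σ)` maps `(-1, 1)` onto `(0, b)`, with
`x ^ σ = b ^ σ (1 + t) / 2` and `dx = x / (σ (1 + t)) dt`. Every `f` in the span is
`x ^ (2σ(β - μ - η)) q (x ^ σ)` with `deg q ≤ 2n + 1`, and the substitution turns the integral into
`(1/σ) (b^σ/2)^(α+β+1) ∫ q(b^σ (1 + t) / 2) (1 - t)^α (1 + t)^β dt`, a Gauss–Jacobi integral of a
polynomial of degree `≤ 2n + 1`. At the nodes the factor `x_j ^ (2σ(η + μ - β))` of the weights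
cancels the prefix `x_j ^ (2σ(β - μ - η))` of `f`. No integrability is needed: the change of
variables holds for arbitrary integrands, and the only other operation on integrals is pulling out
a constant factor.
-/

open Real MeasureTheory Finset Polynomial

theorem exists_polynomial_eq_of_mem_span_rpow {e σ : ℝ} {m : ℕ} {f : ℝ → ℝ}
    (hf : f ∈ Submodule.span ℝ
      (Set.range fun k : Fin (m + 1) => fun x : ℝ => x ^ (e + (k : ℕ) * σ))) :
    ∃ q : ℝ[X], q.natDegree ≤ m ∧ ∀ x > 0, f x = x ^ e * q.eval (x ^ σ) := by
  obtain ⟨c, rfl⟩ := (Submodule.mem_span_range_iff_exists_fun ℝ).1 hf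
  refine ⟨∑ k : Fin (m + 1), C (c k) * X ^ (k : ℕ), ?_, fun x hx => ?_⟩
  · exact natDegree_sum_le_of_forall_le _ _ fun k _ =>
      (natDegree_C_mul_X_pow_le _ _).trans (Nat.lt_succ_iff.1 k.2)
  · simp only [Finset.sum_apply, Pi.smul_apply, smul_eq_mul, eval_finsetSum, eval_mul, eval_C,
      eval_pow, eval_X, Finset.mul_sum]
    refine Finset.sum_congr rfl fun k _ => ?_
    rw [rpow_add hx, mul_comm _ σ, rpow_mul_natCast hx.le]
    ring

noncomputable def muntzNode (b σ t : ℝ) : ℝ := b * ((1 + t) / 2) ^ (1 / σ)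

section
variable {b σ t : ℝ}

theorem muntzNode_pos (hb : 0 < b) (ht : -1 < t) : 0 < muntzNode b σ t := by
  unfold muntzNode
  have : 0 < (1 + t) / 2 := by linarith
  positivity

theorem muntzNode_rpow (hb : 0 ≤ b) (hσ : σ ≠ 0) (ht : -1 ≤ t) :
    muntzNode b σ t ^ σ = b ^ σ / 2 * (1 + t) := by
  have hs : 0 ≤ (1 + t) / 2 := by linarith
  rw [muntzNode, mul_rpow hb (rpow_nonneg hs _), ← rpow_mul hs, one_div_mul_cancel hσ, rpow_one]
  ring

theorem hasDerivAt_muntzNode (hσ : σ ≠ 0) (ht : -1 < t) :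
    HasDerivAt (muntzNode b σ) (muntzNode b σ t / (σ * (1 + t))) t := by
  have hs : 0 < (1 + t) / 2 := by linarith
  have h : HasDerivAt (fun y => b * ((1 + y) / 2) ^ (1 / σ))
      (b * (1 / 2 * (1 / σ) * ((1 + t) / 2) ^ (1 / σ - 1))) t := by
    simpa using ((((hasDerivAt_id t).const_add 1).div_const 2).rpow_const
      (p := 1 / σ) (Or.inl hs.ne')).const_mul b
  refine h.congr_deriv ?_
  rw [muntzNode, rpow_sub_one hs.ne']
  field_simp

theorem strictMonoOn_muntzNode (hb : 0 < b) (hσ : 0 < σ) :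
    StrictMonoOn (muntzNode b σ) (Set.Ioi (-1)) := fun t₁ ht₁ t₂ _ h =>
  mul_lt_mul_of_pos_left
    (rpow_lt_rpow (by linarith [Set.mem_Ioi.1 ht₁]) (by linarith) (by positivity)) hb

theorem muntzNode_image_Ioo (hb : 0 < b) (hσ : 0 < σ) :
    muntzNode b σ '' Set.Ioo (-1) 1 = Set.Ioo 0 b := by
  ext x
  constructor
  · rintro ⟨t, ⟨ht₀, ht₁⟩, rfl⟩
    refine ⟨muntzNode_pos hb ht₀, ?_⟩
    have : ((1 + t) / 2) ^ (1 / σ) < 1 := rpow_lt_one (by linarith) (by linarith) (by positivity)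
    simpa [muntzNode] using mul_lt_mul_of_pos_left this hb
  · rintro ⟨hx₀, hxb⟩
    have hxb' : (x / b) ^ σ < 1 := rpow_lt_one (by positivity) ((div_lt_one hb).2 hxb) hσ
    refine ⟨2 * (x / b) ^ σ - 1, ⟨by linarith [rpow_pos_of_pos (div_pos hx₀ hb) σ], by linarith⟩, ?_⟩
    rw [muntzNode, show (1 + (2 * (x / b) ^ σ - 1)) / 2 = (x / b) ^ σ by ring,
      ← rpow_mul (by positivity), mul_one_div_cancel hσ.ne', rpow_one]
    field_simp

theorem integral_eq_integral_comp_muntzNode (hb : 0 < b) (hσ : 0 < σ) (g : ℝ → ℝ) :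
    ∫ x in (0 : ℝ)..b, g x =
      ∫ t in (-1 : ℝ)..1, muntzNode b σ t / (σ * (1 + t)) * g (muntzNode b σ t) := by
  rw [intervalIntegral.integral_of_le hb.le, intervalIntegral.integral_of_le (by norm_num),
    integral_Ioc_eq_integral_Ioo, integral_Ioc_eq_integral_Ioo, ← muntzNode_image_Ioo hb hσ,
    integral_image_eq_integral_abs_deriv_smul measurableSet_Ioo
      (fun t ht => (hasDerivAt_muntzNode hσ.ne' ht.1).hasDerivWithinAt)
      ((strictMonoOn_muntzNode hb hσ).injOn.mono Set.Ioo_subset_Ioi_self)]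
  refine setIntegral_congr_fun measurableSet_Ioo fun t ht => ?_
  have : 0 < 1 + t := by linarith [ht.1]
  rw [smul_eq_mul, abs_of_pos (div_pos (muntzNode_pos hb ht.1) (by positivity))]

theorem muntzNode_jacobian_mul_weight (hb : 0 < b) (hσ : 0 < σ) (α β : ℝ)
    (ht : t ∈ Set.Ioo (-1) 1) :
    muntzNode b σ t / (σ * (1 + t)) *
        (muntzNode b σ t ^ (σ * (β + 1) - 1) * (b ^ σ - muntzNode b σ t ^ σ) ^ α) =
      1 / σ * (b ^ σ / 2) ^ (α + β + 1) * ((1 - t) ^ α * (1 + t) ^ β) := by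
  obtain ⟨ht₀, ht₁⟩ := ht
  have hx := muntzNode_pos (σ := σ) hb ht₀
  have hxσ := muntzNode_rpow hb.le hσ.ne' ht₀.le
  have hc : 0 < b ^ σ / 2 := by positivity
  have h1t : 0 < 1 + t := by linarith
  have hdiff : b ^ σ - b ^ σ / 2 * (1 + t) = b ^ σ / 2 * (1 - t) := by ring
  rw [rpow_sub_one hx.ne', rpow_mul hx.le, hxσ, hdiff, mul_rpow hc.le h1t.le,
    mul_rpow hc.le (by linarith), rpow_add_one h1t.ne', add_assoc, rpow_add hc α]
  field_simp

theorem muntzNode_jacobian_mul_integrand (hb : 0 < b) (hσ : 0 < σ) {α β e γ : ℝ}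
    (heγ : e + γ = σ * (β + 1)) {f : ℝ → ℝ} {q : ℝ[X]}
    (hfq : ∀ x > 0, f x = x ^ e * q.eval (x ^ σ)) (ht : t ∈ Set.Ioo (-1) 1) :
    muntzNode b σ t / (σ * (1 + t)) *
        (f (muntzNode b σ t) * (muntzNode b σ t ^ (γ - 1) * (b ^ σ - muntzNode b σ t ^ σ) ^ α)) =
      1 / σ * (b ^ σ / 2) ^ (α + β + 1) *
        (q.eval (b ^ σ / 2 * (1 + t)) * ((1 - t) ^ α * (1 + t) ^ β)) := by
  have hx := muntzNode_pos (σ := σ) hb ht.1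
  have hexp : muntzNode b σ t ^ e * muntzNode b σ t ^ (γ - 1) =
      muntzNode b σ t ^ (σ * (β + 1) - 1) := by
    rw [← rpow_add hx, ← heγ, add_sub_assoc]
  calc _ = q.eval (muntzNode b σ t ^ σ) * (muntzNode b σ t / (σ * (1 + t)) *
        (muntzNode b σ t ^ (σ * (β + 1) - 1) * (b ^ σ - muntzNode b σ t ^ σ) ^ α)) := by
        rw [hfq _ hx, ← hexp]; ring
    _ = _ := by
        rw [muntzNode_jacobian_mul_weight hb hσ α β ht, muntzNode_rpow hb.le hσ.ne' ht.1.le]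
        ring

theorem muntzNode_rpow_mul_apply (hb : 0 < b) (hσ : 0 < σ) {e e' : ℝ} (he : e' + e = 0)
    {f : ℝ → ℝ} {q : ℝ[X]} (hfq : ∀ x > 0, f x = x ^ e * q.eval (x ^ σ)) (ht : -1 < t) :
    muntzNode b σ t ^ e' * f (muntzNode b σ t) = q.eval (b ^ σ / 2 * (1 + t)) := by
  have hx := muntzNode_pos (σ := σ) hb ht
  rw [hfq _ hx, ← mul_assoc, ← rpow_add hx, he, rpow_zero, one_mul,
    muntzNode_rpow hb.le hσ.ne' ht.le]

end

theorem muntz_quadrature_first_kind_general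
    (b σ α β η μ : ℝ) (hb : 0 < b) (hσ : 0 < σ) (n : ℕ)
    (ξ ω : Fin (n + 1) → ℝ) (hξ : ∀ j, ξ j ∈ Set.Ioo (-1 : ℝ) 1)
    (hquad : ∀ p : Polynomial ℝ, p.natDegree ≤ 2 * n + 1 →
      ∫ x in (-1 : ℝ)..1, p.eval x * ((1 - x) ^ α * (1 + x) ^ β) =
        ∑ j, ω j * p.eval (ξ j))
    (f : ℝ → ℝ)
    (hf : f ∈ Submodule.span ℝ
      (Set.range fun k : Fin (2 * n + 2) =>
        fun x : ℝ => x ^ (2 * σ * (β - μ - η) + (k : ℕ) * σ))) :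
    ∫ x in (0:ℝ)..b, f x * (x ^ (σ * (2 * (η + μ) - β + 1) - 1) * (b ^ σ - x ^ σ) ^ α) =
      ∑ j, ((1 / σ) * (b ^ σ / 2) ^ (α + β + 1) * ω j *
          (b * ((1 + ξ j) / 2) ^ (1 / σ)) ^ (2 * σ * (η + μ - β))) *
        f (b * ((1 + ξ j) / 2) ^ (1 / σ)) := by
  obtain ⟨q, hq, hfq⟩ := exists_polynomial_eq_of_mem_span_rpow hf
  set p := q.comp (C (b ^ σ / 2) * X + C (b ^ σ / 2))
  have hp : p.natDegree ≤ 2 * n + 1 :=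
    calc p.natDegree ≤ q.natDegree * 1 :=
          natDegree_comp_le.trans (Nat.mul_le_mul_left _ natDegree_linear_le)
      _ ≤ 2 * n + 1 := by rwa [mul_one]
  have hp_eval (t : ℝ) : p.eval t = q.eval (b ^ σ / 2 * (1 + t)) := by
    simp only [p, eval_comp, eval_add, eval_mul, eval_C, eval_X]
    rw [mul_add, mul_one, add_comm]
  have h_integrand : Set.EqOn
      (fun t => muntzNode b σ t / (σ * (1 + t)) * (f (muntzNode b σ t) *
        (muntzNode b σ t ^ (σ * (2 * (η + μ) - β + 1) - 1) * (b ^ σ - muntzNode b σ t ^ σ) ^ α)))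
      (fun t => 1 / σ * (b ^ σ / 2) ^ (α + β + 1) * (p.eval t * ((1 - t) ^ α * (1 + t) ^ β)))
      (Set.uIoo (-1) 1) := fun t ht => by
    rw [Set.uIoo_of_le (by norm_num)] at ht
    simpa only [hp_eval] using muntzNode_jacobian_mul_integrand hb hσ (by ring) hfq ht
  rw [integral_eq_integral_comp_muntzNode hb hσ, intervalIntegral.integral_congr_uIoo h_integrand,
    intervalIntegral.integral_const_mul, hquad p hp, Finset.mul_sum]
  refine Finset.sum_congr rfl fun j _ => ?_
  rw [hp_eval, ← muntzNode_rpow_mul_apply hb hσ (e' := 2 * σ * (η + μ - β)) (by ring) hfq (hξ j).1]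
  simp only [muntzNode]
  ring

theorem muntz_quadrature_first_kind
    (b σ α β η μ : ℝ) (hb : 0 < b) (hσ : 0 < σ) (hα : α > -1) (hβ : β > -1) (n : ℕ)
    (ξ ω : Fin (n + 1) → ℝ) (hξ : ∀ j, ξ j ∈ Set.Ioo (-1 : ℝ) 1)
    (hinj : Function.Injective ξ)
    (hquad : ∀ p : Polynomial ℝ, p.natDegree ≤ 2 * n + 1 →
      ∫ x in (-1 : ℝ)..1, p.eval x * ((1 - x) ^ α * (1 + x) ^ β) =
        ∑ j, ω j * p.eval (ξ j))
    (f : ℝ → ℝ)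
    (hf : f ∈ Submodule.span ℝ
      (Set.range fun k : Fin (2 * n + 2) =>
        fun x : ℝ => x ^ (2 * σ * (β - μ - η) + (k : ℕ) * σ))) :
    ∫ x in (0:ℝ)..b, f x * (x ^ (σ * (2 * (η + μ) - β + 1) - 1) * (b ^ σ - x ^ σ) ^ α) =
      ∑ j, ((1 / σ) * (b ^ σ / 2) ^ (α + β + 1) * ω j *
          (b * ((1 + ξ j) / 2) ^ (1 / σ)) ^ (2 * σ * (η + μ - β))) *
        f (b * ((1 + ξ j) / 2) ^ (1 / σ)) :=
  muntz_quadrature_first_kind_general b σ α β η μ hb hσ n ξ ω hξ hquad f hf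
end

section
/- Let b > 0, σ > 0, α, β > −1, η ∈ ℝ, and n ∈ ℕ. Assume the Gauss–Jacobi hypothesis holds for ξ_0,…,ξ_n and ω_0,…,ω_n, and set x_j = b((1+ξ_j)/2)^{1/σ}, w_j = (1/σ)(b^σ/2)^{α+β+1} ω_j, and w_j^{(2)} = w_j · (b^σ − x_j^σ)^{−2α} x_j^{−2ση}. Then for every function f in the linear span of {(b^σ − x^σ)^{2α} x^{2ση+kσ} : k = 0, 1, …, 2n+1}, one has ∫_0^b f(x) x^{σ(β−2η+1)−1} (b^σ − x^σ)^{−α} dx = Σ_{j=0}^{n} w_j^{(2)} f(x_j). -/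
open Real MeasureTheory Finset

private lemma muntz_aux_pow {b σ : ℝ} (hb : 0 < b) (hσ : 0 < σ) {t : ℝ} (ht1 : -1 < t) :
    (b * ((1+t)/2)^(1/σ))^σ = b^σ * ((1+t)/2) := by
  have hu : (0:ℝ) < (1+t)/2 := by linarith
  rw [Real.mul_rpow hb.le (Real.rpow_nonneg hu.le _), ← Real.rpow_mul hu.le,
    one_div_mul_cancel hσ.ne', Real.rpow_one]

private lemma muntz_perk (b σ α β η : ℝ) (hb : 0 < b) (hσ : 0 < σ) (k : ℕ) (t : ℝ)
    (ht1 : -1 < t) (ht2 : t < 1) :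
    (b * (((1+t)/2)^(1/σ - 1) * (1/(2*σ)))) *
      ((b^σ - (b*((1+t)/2)^(1/σ))^σ)^(2*α) * ((b*((1+t)/2)^(1/σ))^(2*σ*η + (k:ℝ)*σ) *
       ((b*((1+t)/2)^(1/σ))^(σ*(β-2*η+1)-1) * (b^σ - (b*((1+t)/2)^(1/σ))^σ)^(-α))))
    = (1/σ * (b^σ/2)^(α+β+1)) * ((b^σ/2*(1+t))^k * ((1-t)^α * (1+t)^β)) := by
  have h1t : (0:ℝ) < 1 - t := by linarith
  have h1t' : (0:ℝ) < 1 + t := by linarith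
  have hu : (0:ℝ) < (1+t)/2 := by linarith
  have hbσ : (0:ℝ) < b ^ σ := rpow_pos_of_pos hb σ
  have hx : (0:ℝ) < b * ((1+t)/2)^(1/σ) := mul_pos hb (rpow_pos_of_pos hu _)
  have hxσ : (b * ((1+t)/2)^(1/σ))^σ = b^σ * ((1+t)/2) := muntz_aux_pow hb hσ ht1
  rw [hxσ, show b^σ - b^σ*((1+t)/2) = b^σ*((1-t)/2) by ring,
    ← Real.rpow_natCast (b^σ/2*(1+t)) k]
  have hBq : (0:ℝ) < b^σ*((1-t)/2) := by positivity
  have hA : (0:ℝ) < b^σ/2*(1+t) := by positivity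
  have hLpos : 0 < (b * (((1+t)/2)^(1/σ - 1) * (1/(2*σ)))) *
      ((b^σ*((1-t)/2))^(2*α) * ((b*((1+t)/2)^(1/σ))^(2*σ*η + (k:ℝ)*σ) *
       ((b*((1+t)/2)^(1/σ))^(σ*(β-2*η+1)-1) * (b^σ*((1-t)/2))^(-α)))) := by positivity
  have hRpos : 0 < (1/σ * (b^σ/2)^(α+β+1)) * ((b^σ/2*(1+t))^((k:ℝ)) * ((1-t)^α * (1+t)^β)) := by
    positivity
  rw [← Real.log_injOn_pos.eq_iff (Set.mem_Ioi.2 hLpos) (Set.mem_Ioi.2 hRpos)]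
  simp only [Real.log_mul, Real.log_rpow, Real.log_div, Real.log_one, ne_eq,
    mul_ne_zero_iff, hb.ne', hσ.ne', h1t.ne', h1t'.ne', hu.ne', hbσ.ne', hx.ne',
    hBq.ne', hA.ne', hLpos.ne', hRpos.ne', not_false_eq_true,
    Real.log_inv, (Real.rpow_pos_of_pos hu (1/σ-1)).ne', (Real.rpow_pos_of_pos hu (1/σ)).ne',
    (Real.rpow_pos_of_pos hBq (2*α)).ne', (Real.rpow_pos_of_pos hx (2*σ*η + (k:ℝ)*σ)).ne',
    (Real.rpow_pos_of_pos hx (σ*(β-2*η+1)-1)).ne', (Real.rpow_pos_of_pos hBq (-α)).ne',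
    (Real.rpow_pos_of_pos (by positivity : (0:ℝ) < b^σ/2) (α+β+1)).ne',
    (Real.rpow_pos_of_pos hA ((k:ℝ))).ne', (Real.rpow_pos_of_pos h1t α).ne',
    (Real.rpow_pos_of_pos h1t' β).ne', Real.log_rpow (by positivity : (0:ℝ) < b^σ/2),
    Real.log_rpow hb, Real.log_rpow hu,
    Real.log_rpow hbσ, Real.log_rpow hx, Real.log_rpow hBq, Real.log_rpow hA,
    or_false, false_or, and_true, true_and, inv_eq_zero, OfNat.ofNat_ne_zero,
    mul_eq_zero, div_eq_zero_iff, one_ne_zero, Real.log_rpow h1t, Real.log_rpow h1t']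
  field_simp
  ring

private lemma muntz_perj (b σ α η : ℝ) (hb : 0 < b) (hσ : 0 < σ) (k : ℕ) (s : ℝ)
    (hs1 : -1 < s) (hs2 : s < 1) :
    (b^σ - (b*((1+s)/2)^(1/σ))^σ)^(-(2*α)) *
      ((b*((1+s)/2)^(1/σ))^(-(2*σ*η)) *
        ((b^σ - (b*((1+s)/2)^(1/σ))^σ)^(2*α) * (b*((1+s)/2)^(1/σ))^(2*σ*η + (k:ℝ)*σ)))
    = (b^σ/2*(1+s))^k := by
  have h1s : (0:ℝ) < 1 - s := by linarith
  have hu : (0:ℝ) < (1+s)/2 := by linarith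
  have hbσ : (0:ℝ) < b ^ σ := rpow_pos_of_pos hb σ
  have hx : (0:ℝ) < b * ((1+s)/2)^(1/σ) := mul_pos hb (rpow_pos_of_pos hu _)
  have hxσ : (b * ((1+s)/2)^(1/σ))^σ = b^σ * ((1+s)/2) := muntz_aux_pow hb hσ hs1
  have hBq : (0:ℝ) < b^σ - (b*((1+s)/2)^(1/σ))^σ := by rw [hxσ]; nlinarith
  calc (b^σ - (b*((1+s)/2)^(1/σ))^σ)^(-(2*α)) *
      ((b*((1+s)/2)^(1/σ))^(-(2*σ*η)) *
        ((b^σ - (b*((1+s)/2)^(1/σ))^σ)^(2*α) * (b*((1+s)/2)^(1/σ))^(2*σ*η + (k:ℝ)*σ)))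
      = ((b^σ - (b*((1+s)/2)^(1/σ))^σ)^(-(2*α)) * (b^σ - (b*((1+s)/2)^(1/σ))^σ)^(2*α)) *
        ((b*((1+s)/2)^(1/σ))^(-(2*σ*η)) * (b*((1+s)/2)^(1/σ))^(2*σ*η + (k:ℝ)*σ)) := by ring
    _ = (b*((1+s)/2)^(1/σ))^(σ*(k:ℝ)) := by
        rw [← Real.rpow_add hBq, ← Real.rpow_add hx,
          show -(2*α) + 2*α = (0:ℝ) by ring, Real.rpow_zero,
          show -(2*σ*η) + (2*σ*η + (k:ℝ)*σ) = σ*(k:ℝ) by ring, one_mul]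
    _ = (b^σ/2*(1+s))^k := by
        rw [Real.rpow_mul hx.le, hxσ, Real.rpow_natCast,
          show b^σ * ((1+s)/2) = b^σ/2*(1+s) by ring]

theorem muntz_quadrature_second_kind
    (b σ α β η : ℝ) (hb : 0 < b) (hσ : 0 < σ) (hα : α > -1) (hβ : β > -1) (n : ℕ)
    (ξ ω : Fin (n + 1) → ℝ) (hξ : ∀ j, ξ j ∈ Set.Ioo (-1 : ℝ) 1)
    (hinj : Function.Injective ξ)
    (hquad : ∀ p : Polynomial ℝ, p.natDegree ≤ 2 * n + 1 →
      ∫ x in (-1 : ℝ)..1, p.eval x * ((1 - x) ^ α * (1 + x) ^ β) =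
        ∑ j, ω j * p.eval (ξ j))
    (f : ℝ → ℝ)
    (hf : f ∈ Submodule.span ℝ
      (Set.range fun k : Fin (2 * n + 2) =>
        fun x : ℝ => (b ^ σ - x ^ σ) ^ (2 * α) * x ^ (2 * σ * η + (k : ℕ) * σ))) :
    ∫ x in (0:ℝ)..b, f x * (x ^ (σ * (β - 2 * η + 1) - 1) * (b ^ σ - x ^ σ) ^ (-α)) =
      ∑ j, ((1 / σ) * (b ^ σ / 2) ^ (α + β + 1) * ω j *
          (b ^ σ - (b * ((1 + ξ j) / 2) ^ (1 / σ)) ^ σ) ^ (-(2 * α)) *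
          (b * ((1 + ξ j) / 2) ^ (1 / σ)) ^ (-(2 * σ * η))) *
        f (b * ((1 + ξ j) / 2) ^ (1 / σ)) := by
  obtain ⟨c, hc⟩ := Submodule.mem_span_range_iff_exists_fun ℝ |>.mp hf
  have hfx : ∀ x : ℝ, f x = ∑ k : Fin (2*n+2),
      c k * ((b ^ σ - x ^ σ) ^ (2 * α) * x ^ (2 * σ * η + ((k:ℕ):ℝ) * σ)) := by
    intro x
    rw [← hc]
    simp [Finset.sum_apply]
  -- the polynomial
  set P : Polynomial ℝ := ∑ k : Fin (2*n+2),
    Polynomial.C (c k) * (Polynomial.C (b^σ/2) * (1 + Polynomial.X))^(k:ℕ) with hP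
  have hPdeg : P.natDegree ≤ 2*n + 1 := by
    apply Polynomial.natDegree_sum_le_of_forall_le
    intro k _
    refine (Polynomial.natDegree_C_mul_le _ _).trans ?_
    refine (Polynomial.natDegree_pow_le).trans ?_
    have h1 : (Polynomial.C (b^σ/2) * (1 + Polynomial.X)).natDegree ≤ 1 := by
      refine (Polynomial.natDegree_C_mul_le _ _).trans ?_
      refine (Polynomial.natDegree_add_le _ _).trans ?_
      simp
    calc (k:ℕ) * (Polynomial.C (b^σ/2) * (1 + Polynomial.X)).natDegree ≤ (k:ℕ) * 1 :=
          Nat.mul_le_mul_left _ h1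
      _ ≤ 2*n+1 := by simpa using Fin.is_le k
  have hPeval : ∀ s : ℝ, P.eval s = ∑ k : Fin (2*n+2), c k * (b^σ/2*(1+s))^(k:ℕ) := by
    intro s
    simp [hP, Polynomial.eval_finset_sum]
  -- substitution data
  set φ : ℝ → ℝ := fun t => b * ((1+t)/2)^(1/σ) with hφ
  set D : ℝ → ℝ := fun t => b * (((1+t)/2)^(1/σ - 1) * (1/(2*σ))) with hDdef
  have hIm : φ '' Set.Ioo (-1:ℝ) 1 = Set.Ioo 0 b := by
    ext x
    constructor
    · rintro ⟨t, ⟨ht1, ht2⟩, rfl⟩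
      have hu : (0:ℝ) < (1+t)/2 := by linarith
      have hu1 : (1+t)/2 < 1 := by linarith
      refine ⟨by positivity, ?_⟩
      have : ((1+t)/2)^(1/σ) < 1 := Real.rpow_lt_one hu.le hu1 (by positivity)
      calc b * ((1+t)/2)^(1/σ) < b * 1 := by
            exact mul_lt_mul_of_pos_left this hb
        _ = b := mul_one b
    · rintro ⟨hx0, hxb⟩
      have hdb : (0:ℝ) < x/b := div_pos hx0 hb
      have hdb1 : x/b < 1 := (div_lt_one hb).2 hxb
      have hr0 : (0:ℝ) < (x/b)^σ := rpow_pos_of_pos hdb σ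
      have hr1 : (x/b)^σ < 1 := Real.rpow_lt_one hdb.le hdb1 hσ
      refine ⟨2*(x/b)^σ - 1, ⟨by linarith, by linarith⟩, ?_⟩
      show b * ((1 + (2*(x/b)^σ - 1))/2)^(1/σ) = x
      rw [show (1 + (2*(x/b)^σ - 1))/2 = (x/b)^σ by ring,
        ← Real.rpow_mul (div_nonneg hx0.le hb.le), mul_one_div_cancel hσ.ne',
        Real.rpow_one]
      field_simp
  have hDpos : ∀ t ∈ Set.Ioo (-1:ℝ) 1, 0 < D t := by
    rintro t ⟨ht1, ht2⟩
    have hu : (0:ℝ) < (1+t)/2 := by linarith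
    exact mul_pos hb (mul_pos (rpow_pos_of_pos hu _) (by positivity))
  have hDeriv : ∀ t ∈ Set.Ioo (-1:ℝ) 1, HasDerivWithinAt φ (D t) (Set.Ioo (-1:ℝ) 1) t := by
    rintro t ⟨ht1, ht2⟩
    have hu : (0:ℝ) < (1+t)/2 := by linarith
    have h1 : HasDerivAt (fun t : ℝ => (1+t)/2) (1/2) t := by
      simpa using ((hasDerivAt_id t).const_add 1).div_const 2
    have h2 : HasDerivAt (fun t : ℝ => ((1+t)/2)^(1/σ))
        (1/2 * (1/σ) * ((1+t)/2)^(1/σ - 1)) t := h1.rpow_const (Or.inl hu.ne')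
    have h3 := h2.const_mul b
    refine (h3.congr_deriv ?_).hasDerivWithinAt
    simp only [hDdef]
    ring
  have hInj : Set.InjOn φ (Set.Ioo (-1:ℝ) 1) := by
    rintro t1 ⟨h11, h12⟩ t2 ⟨h21, h22⟩ heq
    have e1 : (φ t1)^σ = b^σ * ((1+t1)/2) := muntz_aux_pow hb hσ h11
    have e2 : (φ t2)^σ = b^σ * ((1+t2)/2) := muntz_aux_pow hb hσ h21
    have : b^σ * ((1+t1)/2) = b^σ * ((1+t2)/2) := by rw [← e1, ← e2, heq]
    have hbσ : (0:ℝ) < b ^ σ := rpow_pos_of_pos hb σ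
    have := mul_left_cancel₀ hbσ.ne' this
    linarith
  -- the key integral computation
  have key : ∫ x in (0:ℝ)..b, f x * (x ^ (σ * (β - 2 * η + 1) - 1) * (b ^ σ - x ^ σ) ^ (-α)) =
      (1/σ * (b^σ/2)^(α+β+1)) * ∫ t in (-1:ℝ)..1, P.eval t * ((1-t)^α * (1+t)^β) := by
    rw [intervalIntegral.integral_of_le hb.le, MeasureTheory.integral_Ioc_eq_integral_Ioo,
      ← hIm, integral_image_eq_integral_abs_deriv_smul measurableSet_Ioo hDeriv hInj]
    rw [intervalIntegral.integral_of_le (by norm_num : (-1:ℝ) ≤ 1),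
      MeasureTheory.integral_Ioc_eq_integral_Ioo, ← MeasureTheory.integral_const_mul]
    apply MeasureTheory.setIntegral_congr_fun measurableSet_Ioo
    rintro t ⟨ht1, ht2⟩
    dsimp only
    have habs : |D t| = D t := abs_of_pos (hDpos t ⟨ht1, ht2⟩)
    rw [smul_eq_mul, habs, hfx (φ t), hPeval t]
    simp only [hφ, hDdef]
    rw [Finset.sum_mul, Finset.mul_sum, Finset.sum_mul, Finset.mul_sum]
    refine Finset.sum_congr rfl fun k _ => ?_
    linear_combination (c k) * muntz_perk b σ α β η hb hσ (k:ℕ) t ht1 ht2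
  rw [key, hquad P hPdeg, Finset.mul_sum]
  refine Finset.sum_congr rfl fun j _ => ?_
  obtain ⟨hj1, hj2⟩ := hξ j
  rw [hfx (b * ((1 + ξ j) / 2) ^ (1 / σ)), hPeval (ξ j), Finset.mul_sum, Finset.mul_sum,
    Finset.mul_sum]
  refine Finset.sum_congr rfl fun k _ => ?_
  linear_combination (-(1/σ * (b^σ/2)^(α+β+1))) * (ω j) * (c k) *
    muntz_perj b σ α η hb hσ (k:ℕ) (ξ j) hj1 hj2
end
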